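/- arXiv:1102.2109 — 2 statements merged into one kernel-verified Lean document; each statement's English description precedes it below -/
import Mathlib

section
/- Eigenvalue repulsion, Dirichlet case: for any two distinct eigenvalues E_i ≠ E_j of the Dirichlet Hamiltonian H, one has |E_i − E_j| ≥ π(η(W)^{−1} − 1)/(η(W)^{−N} − 1). In particular, the minimal spacing between eigenvalues of H is bounded below by a constant of order e^{−bN}, for every choice of the potential values ε_1, …, ε_N in [0, W]. -/
/-- The quadratic form `q(x, φ) = 1 − 2x sin φ cos φ + x² sin² φ`. -/
noncomputable def qform (x φ : ℝ) : ℝ :=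
  1 - 2 * x * Real.sin φ * Real.cos φ + x ^ 2 * Real.sin φ ^ 2

/-- `η(W) = min { q(x, φ) : |x| ≤ W + 1, 0 ≤ φ ≤ π }` (the minimum exists by
compactness, so it coincides with the infimum). -/
noncomputable def eta (W : ℝ) : ℝ :=
  sInf ((fun p : ℝ × ℝ => qform p.1 p.2) '' (Set.Icc (-(W + 1)) (W + 1) ×ˢ Set.Icc 0 Real.pi))

/-- The Dirichlet Hamiltonian: the `N × N` symmetric tridiagonal matrix with diagonal
entries `ε_n` and off-diagonal entries `1`, i.e. `(Hu)_n = u_{n−1} + ε_n u_n + u_{n+1}`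
with `u_0 = u_{N+1} = 0`. -/
def dirichletH (N : ℕ) (ε : Fin N → ℝ) : Matrix (Fin N) (Fin N) ℝ :=
  fun i j =>
    if i = j then ε i
    else if i.val + 1 = j.val ∨ j.val + 1 = i.val then 1 else 0

/-!
The characteristic polynomials `p n` of the leading `n × n` blocks of `H` satisfy the three-term
recursion `p (n+2) = (X - ε_{n+1}) p (n+1) - p n`, and the values `p n (E)` solve `Hu = Eu` with
`u₀ = 0`, so the eigenvalues of `H` are the roots of `p N`. An energy identity shows that every
complex root is real and lies in `[-2, W + 2]`, hence `p N` splits over `ℝ`.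

At a root `E₁` the Christoffel–Darboux identity `p' N · p (N-1) = ∑_{n<N} (p n)²` gives
`|p' N (E₁)| ≥ 2`, while `p' N (E₁) = (E₁ - E₂) ∏ (E₁ - r)` over the remaining `N - 2` roots.
That product is bounded by AM–GM, using the second moment `∑_r (E₁ - r)² = tr (E₁ - H)²`, which
Vieta's formulas compute from the coefficients of `p N`. With `φ = (y + √(y² + 4)) / 2`,
`y = W + 1`, this yields `|E₁ - E₂| ≥ φ^{-2(N-2)}`, and `η(W) ≤ q(y, arccot φ) = φ⁻²` turns it
into the stated bound.
-/

open Finset Real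

section General

theorem Finset.sum_range_shift_of_eq_zero {M : Type*} [AddCommMonoid M] {g : ℕ → M} {n : ℕ}
    (h0 : g 0 = 0) (hn : g n = 0) : ∑ j ∈ range n, g (j + 1) = ∑ j ∈ range n, g j := by
  have h := (sum_range_succ' g n).symm.trans (sum_range_succ g n)
  rwa [h0, hn, add_zero, add_zero] at h

theorem one_add_two_div_pow_le (k : ℕ) : (1 + 2 / k : ℝ) ^ k ≤ 4 * (9 / 8) ^ k := by
  rcases lt_or_ge k 6 with hk | hk
  · interval_cases k <;> norm_num
  · have hk0 : (k : ℝ) ≠ 0 := by positivity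
    calc (1 + 2 / k : ℝ) ^ k ≤ exp (2 / k) ^ k := by
          gcongr; linarith [add_one_le_exp (2 / k : ℝ)]
      _ = exp 1 ^ 2 := by rw [← exp_nat_mul, ← exp_nat_mul]; field_simp; norm_num
      _ ≤ 4 * (9 / 8) ^ 6 := by nlinarith [exp_one_lt_d9, exp_pos 1]
      _ ≤ 4 * (9 / 8) ^ k := by gcongr; norm_num

theorem pi_mul_sub_one_div_pow_sub_one_le {a b : ℝ} (ha : 1 < a) (hab : a ≤ b) (hπ : π ≤ a + 1)
    (k : ℕ) : π * (b - 1) / (b ^ (k + 2) - 1) ≤ (a ^ k)⁻¹ := by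
  have hb : 1 < b := ha.trans_le hab
  have hbk : 1 ≤ b ^ k := one_le_pow₀ hb.le
  rw [div_le_iff₀ (by nlinarith [one_lt_pow₀ hb (by omega : k + 2 ≠ 0)]), inv_mul_eq_div,
    le_div_iff₀ (by positivity)]
  calc π * (b - 1) * a ^ k ≤ (b + 1) * (b - 1) * b ^ k := by gcongr; linarith
    _ = b ^ (k + 2) - b ^ k := by ring
    _ ≤ b ^ (k + 2) - 1 := by linarith

namespace Multiset

theorem esymm_one {R : Type*} [CommSemiring R] (s : Multiset R) : s.esymm 1 = s.sum := by
  simp [esymm, powersetCard_one]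

theorem esymm_cons_two {R : Type*} [CommSemiring R] (a : R) (s : Multiset R) :
    (a ::ₘ s).esymm 2 = s.esymm 2 + a * s.sum := by
  rw [esymm, powersetCard_cons 1, map_add, sum_add]
  simp only [Nat.reduceAdd, powersetCard_one, map_map, Function.comp_apply, prod_cons,
    prod_singleton, esymm]
  rw [sum_map_mul_left, map_id']

theorem sum_map_sub_sq {R : Type*} [CommRing R] (s : Multiset R) (x : R) :
    (s.map fun r => (x - r) ^ 2).sum
      = card s * x ^ 2 - 2 * x * s.sum + s.sum ^ 2 - 2 * s.esymm 2 := by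
  induction s using Multiset.induction_on with
  | empty => simp [esymm, powersetCard_zero_right]
  | cons a s ih =>
    rw [map_cons, sum_cons, ih, esymm_cons_two, card_cons, sum_cons]
    push_cast
    ring

theorem prod_map_le_pow_card_of_sum_le {ι : Type*} {s : Multiset ι} {g : ι → ℝ} {c : ℝ}
    (hg : ∀ i ∈ s, 0 ≤ g i) (hc : 0 < c) (hsum : (s.map g).sum ≤ card s * c) :
    (s.map g).prod ≤ c ^ card s := by
  have hexp (x : ℝ) : x ≤ c * exp (x / c - 1) := by
    have := add_one_le_exp (x / c - 1)
    rwa [sub_add_cancel, div_le_iff₀' hc] at this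
  calc (s.map g).prod ≤ (s.map fun i => c * exp (g i / c - 1)).prod :=
        prod_map_le_prod_map₀ _ _ hg fun i _ => hexp _
    _ = c ^ card s * exp ((s.map g).sum / c - card s) := by
        rw [prod_map_mul, map_const', prod_replicate,
          show s.map (fun i => exp (g i / c - 1)) = (s.map fun i => g i / c - 1).map exp by
            rw [map_map]; rfl,
          ← exp_multiset_sum, sum_map_sub, sum_map_div, map_const', sum_replicate, nsmul_one]
    _ ≤ c ^ card s := by
        refine mul_le_of_le_one_right (by positivity) (exp_le_one_iff.2 ?_)
        rw [sub_nonpos, div_le_iff₀ hc]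
        exact hsum

theorem prod_map_le_four_mul_pow {ι : Type*} {s : Multiset ι} {g : ι → ℝ} {C : ℝ}
    (hg : ∀ i ∈ s, 0 ≤ g i) (hC : 0 < C) (hsum : (s.map g).sum ≤ (card s + 2) * C) :
    (s.map g).prod ≤ 4 * (9 / 8 * C) ^ card s := by
  rcases (card s).eq_zero_or_pos with hk | hk
  · simp [card_eq_zero.1 hk]
  calc (s.map g).prod ≤ (C * (1 + 2 / card s)) ^ card s := by
        refine prod_map_le_pow_card_of_sum_le hg (by positivity) ?_
        rw [mul_left_comm, mul_add, mul_one, mul_div_cancel₀ _ (by positivity), mul_comm]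
        exact hsum
    _ ≤ C ^ card s * (4 * (9 / 8) ^ card s) := by
        rw [mul_pow]; gcongr; exact one_add_two_div_pow_le _
    _ = 4 * (9 / 8 * C) ^ card s := by rw [mul_pow]; ring

end Multiset

open Polynomial in
theorem Polynomial.two_le_natDegree_of_isRoot {R : Type*} [CommRing R] [IsDomain R] {p : R[X]}
    (hp : p ≠ 0) {x y : R} (hx : p.IsRoot x) (hy : p.IsRoot y) (hxy : x ≠ y) :
    2 ≤ p.natDegree := by
  classical
  calc 2 = ({x, y} : Finset R).card := (card_pair hxy).symm
    _ ≤ p.roots.toFinset.card :=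
        card_le_card (by simp [insert_subset_iff, hp, hx.eq_zero, hy.eq_zero])
    _ ≤ p.natDegree := (Multiset.toFinset_card_le _).trans (card_roots' p)

end General

section DirichletSolution

open ComplexConjugate

variable {f : ℕ → ℝ} {N : ℕ} {z : ℂ} {u : ℕ → ℂ}

/-- The energy identity `z ‖u‖² = ⟨u, Hu⟩`; the boundary values `u 0 = u (N + 1) = 0` make the
two off-diagonal sums conjugate to each other. -/
theorem mul_sum_normSq_eq_of_dirichlet (h0 : u 0 = 0) (hN : u (N + 1) = 0)
    (hu : ∀ j < N, u j + f j * u (j + 1) + u (j + 2) = z * u (j + 1)) :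
    z * ∑ j ∈ range N, Complex.normSq (u (j + 1))
      = ∑ j ∈ range N, f j * Complex.normSq (u (j + 1))
        + 2 * ∑ j ∈ range N, (u j * conj (u (j + 1))).re := by
  have hshift : ∑ j ∈ range N, u (j + 2) * conj (u (j + 1))
      = conj (∑ j ∈ range N, u j * conj (u (j + 1))) := by
    calc ∑ j ∈ range N, u (j + 2) * conj (u (j + 1))
        = ∑ j ∈ range N, u (j + 1) * conj (u j) :=
          sum_range_shift_of_eq_zero (g := fun j => u (j + 1) * conj (u j)) (by simp [h0])
            (by simp [hN])
      _ = _ := by rw [map_sum]; exact sum_congr rfl fun j _ => by simp [mul_comm]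
  push_cast
  rw [mul_sum]
  calc ∑ j ∈ range N, z * (Complex.normSq (u (j + 1)) : ℂ)
      = ∑ j ∈ range N, (u j + f j * u (j + 1) + u (j + 2)) * conj (u (j + 1)) := by
        refine sum_congr rfl fun j hj => ?_
        rw [hu j (mem_range.1 hj), ← Complex.mul_conj, mul_assoc]
    _ = ∑ j ∈ range N, (f j : ℂ) * Complex.normSq (u (j + 1))
        + ((∑ j ∈ range N, u j * conj (u (j + 1)))
          + conj (∑ j ∈ range N, u j * conj (u (j + 1)))) := by
        rw [← hshift, ← sum_add_distrib, ← sum_add_distrib]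
        refine sum_congr rfl fun j _ => ?_
        rw [← Complex.mul_conj]
        ring
    _ = _ := by rw [Complex.add_conj, Complex.re_sum]; push_cast; rfl

theorem abs_two_mul_sum_re_mul_conj_le (h0 : u 0 = 0) :
    |2 * ∑ j ∈ range N, (u j * conj (u (j + 1))).re|
      ≤ 2 * ∑ j ∈ range N, Complex.normSq (u (j + 1)) := by
  have hterm (a b : ℂ) : |2 * (a * conj b).re| ≤ Complex.normSq a + Complex.normSq b := by
    rw [abs_le]
    constructor <;> nlinarith [Complex.normSq_add a b, Complex.normSq_sub a b,
      Complex.normSq_nonneg (a + b), Complex.normSq_nonneg (a - b)]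
  have hprev : ∑ j ∈ range N, Complex.normSq (u j) ≤ ∑ j ∈ range N, Complex.normSq (u (j + 1)) := by
    have h := (sum_range_succ' (fun j => Complex.normSq (u j)) N).symm.trans
      (sum_range_succ (fun j => Complex.normSq (u j)) N)
    simp only [h0, map_zero, add_zero] at h
    linarith [Complex.normSq_nonneg (u N)]
  calc |2 * ∑ j ∈ range N, (u j * conj (u (j + 1))).re|
      ≤ ∑ j ∈ range N, |2 * (u j * conj (u (j + 1))).re| := by
        rw [mul_sum]; exact abs_sum_le_sum_abs _ _
    _ ≤ ∑ j ∈ range N, (Complex.normSq (u j) + Complex.normSq (u (j + 1))) :=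
        sum_le_sum fun j _ => hterm _ _
    _ ≤ 2 * ∑ j ∈ range N, Complex.normSq (u (j + 1)) := by rw [sum_add_distrib]; linarith

theorem im_eq_zero_and_re_mem_Icc_of_dirichlet {W : ℝ} (hf : ∀ j < N, f j ∈ Set.Icc 0 W)
    (h0 : u 0 = 0) (hN : u (N + 1) = 0) (h1 : u 1 ≠ 0)
    (hu : ∀ j < N, u j + f j * u (j + 1) + u (j + 2) = z * u (j + 1)) :
    z.im = 0 ∧ z.re ∈ Set.Icc (-2) (W + 2) := by
  have key := mul_sum_normSq_eq_of_dirichlet h0 hN hu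
  set Q := ∑ j ∈ range N, Complex.normSq (u (j + 1))
  set F := ∑ j ∈ range N, f j * Complex.normSq (u (j + 1))
  set R := ∑ j ∈ range N, (u j * conj (u (j + 1))).re
  have hR := abs_two_mul_sum_re_mul_conj_le (N := N) h0
  have hQ : 0 < Q := by
    have hN0 : 0 < N := Nat.pos_of_ne_zero fun h => h1 (by subst h; exact hN)
    exact (Complex.normSq_pos.2 h1).trans_le
      (single_le_sum (f := fun j => Complex.normSq (u (j + 1)))
        (fun j _ => Complex.normSq_nonneg _) (mem_range.2 hN0))
  have hF₀ : 0 ≤ F :=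
    sum_nonneg fun j hj => mul_nonneg (hf j (mem_range.1 hj)).1 (Complex.normSq_nonneg _)
  have hFW : F ≤ W * Q := by
    rw [mul_sum]
    exact sum_le_sum fun j hj =>
      mul_le_mul_of_nonneg_right (hf j (mem_range.1 hj)).2 (Complex.normSq_nonneg _)
  have him : z.im * Q = 0 := by simpa using congrArg Complex.im key
  have hre : z.re * Q = F + 2 * R := by simpa using congrArg Complex.re key
  rw [abs_le] at hR
  refine ⟨(mul_eq_zero.1 him).resolve_right hQ.ne', ?_, ?_⟩ <;> nlinarith

end DirichletSolution

/-- The characteristic polynomial of the `n × n` tridiagonal matrix with diagonal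
`f 0, …, f (n - 1)` and off-diagonal entries `1` (cofactor expansion along the last row). -/
noncomputable def tridiagCharpoly (f : ℕ → ℝ) : ℕ → Polynomial ℝ
  | 0 => 1
  | 1 => .X - .C (f 0)
  | n + 2 => (.X - .C (f (n + 1))) * tridiagCharpoly f (n + 1) - tridiagCharpoly f n

namespace tridiagCharpoly

open Polynomial

variable (f : ℕ → ℝ)

theorem add_two (n : ℕ) :
    tridiagCharpoly f (n + 2)
      = (X - C (f (n + 1))) * tridiagCharpoly f (n + 1) - tridiagCharpoly f n :=
  rfl

theorem monic_and_natDegree :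
    ∀ n, (tridiagCharpoly f n).Monic ∧ (tridiagCharpoly f n).natDegree = n
  | 0 => ⟨monic_one, natDegree_one⟩
  | 1 => ⟨monic_X_sub_C _, natDegree_X_sub_C _⟩
  | n + 2 => by
    obtain ⟨hm₁, hd₁⟩ := monic_and_natDegree (n + 1)
    obtain ⟨-, hd₀⟩ := monic_and_natDegree n
    have hm : ((X - C (f (n + 1))) * tridiagCharpoly f (n + 1)).Monic := (monic_X_sub_C _).mul hm₁
    have hd : ((X - C (f (n + 1))) * tridiagCharpoly f (n + 1)).natDegree = n + 2 := by
      rw [(monic_X_sub_C _).natDegree_mul hm₁, natDegree_X_sub_C, hd₁, add_comm]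
    have hlt : (tridiagCharpoly f n).natDegree < n + 2 := by omega
    exact ⟨hm.sub_of_left (degree_lt_degree (hd ▸ hlt)),
      (natDegree_sub_eq_left_of_natDegree_lt (hd ▸ hlt)).trans hd⟩

theorem monic (n : ℕ) : (tridiagCharpoly f n).Monic := (monic_and_natDegree f n).1

theorem natDegree (n : ℕ) : (tridiagCharpoly f n).natDegree = n := (monic_and_natDegree f n).2

theorem aeval_add_two {A : Type*} [CommRing A] [Algebra ℝ A] (z : A) (n : ℕ) :
    aeval z (tridiagCharpoly f (n + 2))
      = (z - algebraMap ℝ A (f (n + 1))) * aeval z (tridiagCharpoly f (n + 1))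
        - aeval z (tridiagCharpoly f n) := by
  simp [tridiagCharpoly]

theorem derivative_mul_sub_mul_derivative :
    ∀ n, derivative (tridiagCharpoly f (n + 1)) * tridiagCharpoly f n
        - derivative (tridiagCharpoly f n) * tridiagCharpoly f (n + 1)
      = ∑ k ∈ range (n + 1), tridiagCharpoly f k ^ 2
  | 0 => by simp [tridiagCharpoly]
  | n + 1 => by
    rw [sum_range_succ, ← derivative_mul_sub_mul_derivative n]
    simp only [tridiagCharpoly, derivative_sub, derivative_mul, derivative_X, derivative_C]
    ring

theorem coeff_self (n : ℕ) : (tridiagCharpoly f n).coeff n = 1 := by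
  simpa only [natDegree] using (monic f n).coeff_natDegree

theorem coeff_succ_self : ∀ n, (tridiagCharpoly f (n + 1)).coeff n = -∑ i ∈ range (n + 1), f i
  | 0 => by simp [tridiagCharpoly]
  | n + 1 => by
    rw [add_two, coeff_sub, sub_mul, coeff_sub, coeff_X_mul, coeff_C_mul, coeff_succ_self n,
      coeff_self, coeff_eq_zero_of_natDegree_lt (by rw [natDegree]; omega),
      sum_range_succ _ (n + 1)]
    ring

/-- By Newton's identity the left side is the sum of the squared roots, i.e. `tr H²`. -/
theorem sq_coeff_sub_two_mul_coeff : ∀ n,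
    (tridiagCharpoly f (n + 2)).coeff (n + 1) ^ 2 - 2 * (tridiagCharpoly f (n + 2)).coeff n
      = ∑ i ∈ range (n + 2), f i ^ 2 + 2 * (n + 1)
  | 0 => by
    simp only [tridiagCharpoly, zero_add, sub_mul, coeff_sub, coeff_X_mul, coeff_X, one_ne_zero,
      ↓reduceIte, coeff_C, zero_sub, coeff_C_mul, sub_zero, mul_one, coeff_one,
      mul_coeff_zero, mul_neg, zero_mul, neg_zero, sub_neg_eq_add, sum_range_succ, range_one,
      sum_singleton, CharP.cast_eq_zero]
    ring
  | n + 1 => by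
    have h := sq_coeff_sub_two_mul_coeff n
    have h0 : (tridiagCharpoly f (n + 1)).coeff (n + 2) = 0 :=
      coeff_eq_zero_of_natDegree_lt (by rw [natDegree]; omega)
    rw [add_two, coeff_sub, coeff_sub, sub_mul, coeff_sub, coeff_sub, coeff_X_mul, coeff_X_mul,
      coeff_C_mul, coeff_C_mul, coeff_self f (n + 2), coeff_self f (n + 1), h0,
      sum_range_succ _ (n + 2)]
    push_cast
    linear_combination h

theorem sum_map_sub_sq_roots {n : ℕ} (hs : (tridiagCharpoly f (n + 2)).Splits) (x : ℝ) :
    ((tridiagCharpoly f (n + 2)).roots.map fun r => (x - r) ^ 2).sum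
      = ∑ i ∈ range (n + 2), (x - f i) ^ 2 + 2 * (n + 1) := by
  set p := tridiagCharpoly f (n + 2)
  have hvieta (k : ℕ) (hk : k ≤ n + 2) :
      p.coeff k = (-1) ^ (n + 2 - k) * p.roots.esymm (n + 2 - k) := by
    rw [coeff_eq_esymm_roots_of_splits hs (by rwa [natDegree]), natDegree,
      (monic f _).leadingCoeff, one_mul]
  have hsum : p.roots.sum = ∑ i ∈ range (n + 2), f i := by
    have := hvieta (n + 1) (by omega)
    rw [coeff_succ_self, show n + 2 - (n + 1) = 1 by omega, Multiset.esymm_one] at this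
    linarith
  have hsq := sq_coeff_sub_two_mul_coeff f n
  rw [hvieta (n + 1) (by omega), hvieta n (by omega), show n + 2 - (n + 1) = 1 by omega,
    show n + 2 - n = 2 by omega, Multiset.esymm_one, hsum] at hsq
  rw [Multiset.sum_map_sub_sq, (splits_iff_card_roots.1 hs).trans (natDegree f _), hsum]
  simp only [sub_sq, sum_add_distrib, sum_sub_distrib, ← mul_sum, sum_const, card_range,
    nsmul_eq_mul]
  push_cast
  linear_combination hsq

theorem two_le_abs_eval_derivative {k : ℕ} {E : ℝ} (hE : (tridiagCharpoly f (k + 2)).IsRoot E) :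
    2 ≤ |eval E (derivative (tridiagCharpoly f (k + 2)))| := by
  have hcd := congrArg (eval E) (derivative_mul_sub_mul_derivative f (k + 1))
  simp only [eval_sub, eval_mul, eval_finsetSum, eval_pow, hE.eq_zero, mul_zero, sub_zero] at hcd
  set d := eval E (derivative (tridiagCharpoly f (k + 2)))
  set b := eval E (tridiagCharpoly f (k + 1))
  have hdb : 1 + b ^ 2 ≤ d * b := by
    have : 0 ≤ ∑ j ∈ range k, eval E (tridiagCharpoly f (j + 1)) ^ 2 :=
      sum_nonneg fun _ _ => sq_nonneg _
    rw [hcd, sum_range_succ, sum_range_succ']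
    simp only [tridiagCharpoly, eval_one, one_pow]
    linarith
  have hb : 0 < |b| := abs_pos.2 fun h => by nlinarith [h ▸ hdb]
  refine le_of_mul_le_mul_right ?_ hb
  calc 2 * |b| ≤ 1 + b ^ 2 := by nlinarith [sq_abs b, sq_nonneg (|b| - 1)]
    _ ≤ d * b := hdb
    _ ≤ |d| * |b| := (le_abs_self _).trans (abs_mul d b).le

variable {f} {N : ℕ} {W : ℝ}

theorem im_eq_zero_and_re_mem_Icc_of_aeval_eq_zero (hf : ∀ i < N, f i ∈ Set.Icc 0 W) {z : ℂ}
    (hz : aeval z (tridiagCharpoly f N) = 0) : z.im = 0 ∧ z.re ∈ Set.Icc (-2) (W + 2) := by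
  refine im_eq_zero_and_re_mem_Icc_of_dirichlet
    (u := fun | 0 => 0 | j + 1 => aeval z (tridiagCharpoly f j))
    hf rfl hz (by simp [tridiagCharpoly]) fun j _ => ?_
  cases j with
  | zero => simp [tridiagCharpoly]
  | succ j => simp only [aeval_add_two, Complex.coe_algebraMap]; ring

theorem splits (hf : ∀ i < N, f i ∈ Set.Icc 0 W) : (tridiagCharpoly f N).Splits := by
  refine Splits.of_splits_map (algebraMap ℝ ℂ) (IsAlgClosed.splits _) fun z hz => ⟨z.re, ?_⟩
  rw [mem_roots', IsRoot, eval_map_algebraMap] at hz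
  have him := (im_eq_zero_and_re_mem_Icc_of_aeval_eq_zero hf hz.2).1
  exact Complex.ext (by simp) (by simp [him])

theorem mem_Icc_of_mem_roots (hf : ∀ i < N, f i ∈ Set.Icc 0 W) {r : ℝ}
    (hr : r ∈ (tridiagCharpoly f N).roots) : r ∈ Set.Icc (-2) (W + 2) := by
  rw [mem_roots', IsRoot] at hr
  have h := (im_eq_zero_and_re_mem_Icc_of_aeval_eq_zero hf (z := r)
    (by rw [← Complex.coe_algebraMap, aeval_algebraMap_apply, coe_aeval_eq_eval, hr.2,
      map_zero])).2
  simpa using h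

theorem sum_map_sub_sq_roots_le {k : ℕ} (hf : ∀ i < k + 2, f i ∈ Set.Icc 0 W) {x : ℝ}
    (hx : x ∈ Set.Icc (-2) (W + 2)) :
    ((tridiagCharpoly f (k + 2)).roots.map fun r => (x - r) ^ 2).sum
      ≤ (k + 2) * ((W + 2) ^ 2 + 2) := by
  have hterm : ∀ i ∈ range (k + 2), (x - f i) ^ 2 ≤ (W + 2) ^ 2 := fun i hi => by
    obtain ⟨h0, hW⟩ := hf i (mem_range.1 hi)
    nlinarith [hx.1, hx.2]
  rw [sum_map_sub_sq_roots f (splits hf)]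
  calc ∑ i ∈ range (k + 2), (x - f i) ^ 2 + 2 * (k + 1)
      ≤ ∑ i ∈ range (k + 2), (W + 2) ^ 2 + 2 * (k + 1) := by grw [sum_le_sum hterm]
    _ ≤ (k + 2) * ((W + 2) ^ 2 + 2) := by
      simp only [sum_const, card_range, nsmul_eq_mul, Nat.cast_add, Nat.cast_ofNat]
      linarith

theorem one_le_abs_sub_mul_pow {k : ℕ} (hf : ∀ i < k + 2, f i ∈ Set.Icc 0 W) {E₁ E₂ : ℝ}
    (h₁ : (tridiagCharpoly f (k + 2)).IsRoot E₁) (h₂ : (tridiagCharpoly f (k + 2)).IsRoot E₂)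
    (hne : E₁ ≠ E₂) {a : ℝ} (ha : 0 ≤ a) (haW : 9 / 8 * ((W + 2) ^ 2 + 2) ≤ a ^ 2) :
    1 ≤ |E₁ - E₂| * a ^ k := by
  classical
  set p := tridiagCharpoly f (k + 2)
  have hs : p.Splits := splits hf
  have hp0 : p ≠ 0 := (monic f _).ne_zero
  have hE₁ : E₁ ∈ p.roots := (mem_roots hp0).2 h₁
  have hE₂ : E₂ ∈ p.roots.erase E₁ :=
    (Multiset.mem_erase_of_ne hne.symm).2 ((mem_roots hp0).2 h₂)
  set t := (p.roots.erase E₁).erase E₂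
  have hcard : Multiset.card t = k := by
    rw [Multiset.card_erase_of_mem hE₂, Multiset.card_erase_of_mem hE₁,
      splits_iff_card_roots.1 hs, natDegree]
    rfl
  have hderiv : eval E₁ (derivative p) = (E₁ - E₂) * (t.map (E₁ - ·)).prod := by
    rw [hs.eval_root_derivative (monic f _) hE₁, ← Multiset.prod_map_erase hE₂]
  have hmoment : (t.map fun r => (E₁ - r) ^ 2).sum ≤ (k + 2) * ((W + 2) ^ 2 + 2) := by
    refine le_trans ?_ (sum_map_sub_sq_roots_le hf (mem_Icc_of_mem_roots hf hE₁))
    rw [← Multiset.sum_map_erase hE₁, ← Multiset.sum_map_erase hE₂]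
    nlinarith [sq_nonneg (E₁ - E₂)]
  have hG : (t.map (E₁ - ·)).prod ^ 2 ≤ (2 * a ^ k) ^ 2 := by
    calc (t.map (E₁ - ·)).prod ^ 2 = (t.map fun r => (E₁ - r) ^ 2).prod := by
          rw [Multiset.prod_map_pow]
      _ ≤ 4 * (9 / 8 * ((W + 2) ^ 2 + 2)) ^ k := by
          rw [← hcard]
          exact Multiset.prod_map_le_four_mul_pow (fun _ _ => sq_nonneg _) (by positivity)
            (hcard ▸ hmoment)
      _ ≤ 4 * (a ^ 2) ^ k := by gcongr
      _ = (2 * a ^ k) ^ 2 := by ring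
  have h2 := two_le_abs_eval_derivative f h₁
  rw [hderiv, abs_mul] at h2
  nlinarith [abs_le_of_sq_le_sq hG (by positivity), abs_nonneg (E₁ - E₂)]

end tridiagCharpoly

section Eta

noncomputable def metallicMean (y : ℝ) : ℝ := (y + √(y ^ 2 + 4)) / 2

theorem metallicMean_sq (y : ℝ) : metallicMean y ^ 2 = y * metallicMean y + 1 := by
  unfold metallicMean
  linear_combination (1 / 4 : ℝ) * sq_sqrt (by positivity : 0 ≤ y ^ 2 + 4)

theorem metallicMean_pos (y : ℝ) : 0 < metallicMean y := by
  have h := sq_sqrt (by positivity : 0 ≤ y ^ 2 + 4)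
  unfold metallicMean
  nlinarith [sqrt_nonneg (y ^ 2 + 4)]

theorem pi_le_metallicMean_sq_add_one {y : ℝ} (hy : 1 ≤ y) : π ≤ metallicMean y ^ 2 + 1 := by
  have h := metallicMean_sq y
  have := metallicMean_pos y
  nlinarith [pi_lt_d2]

theorem le_metallicMean_pow_four {y : ℝ} (hy : 1 ≤ y) :
    9 / 8 * ((y + 1) ^ 2 + 2) ≤ (metallicMean y ^ 2) ^ 2 := by
  have h := metallicMean_sq y
  have hpos := metallicMean_pos y
  have hm : 8 / 5 ≤ metallicMean y := by nlinarith
  rw [h]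
  nlinarith [mul_le_mul_of_nonneg_left hm (by positivity : (0 : ℝ) ≤ y ^ 3),
    mul_le_mul_of_nonneg_left hm (by positivity : (0 : ℝ) ≤ y)]

theorem qform_eq (x θ : ℝ) : qform x θ = (cos θ - x * sin θ) ^ 2 + sin θ ^ 2 := by
  unfold qform
  linear_combination -sin_sq_add_cos_sq θ

theorem qform_pos (x θ : ℝ) : 0 < qform x θ := by
  rw [qform_eq]
  rcases eq_or_ne (sin θ) 0 with h | h
  · have h1 := sin_sq_add_cos_sq θ
    rw [h] at h1 ⊢
    nlinarith
  · positivity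

theorem qform_arctan (x t : ℝ) :
    qform x (arctan t) = ((1 - x * t) ^ 2 + t ^ 2) / (1 + t ^ 2) := by
  rw [qform_eq, cos_arctan, sin_arctan]
  field_simp
  rw [sq_sqrt (by positivity)]

theorem qform_arctan_inv_metallicMean (y : ℝ) :
    qform y (arctan (metallicMean y)⁻¹) = (metallicMean y ^ 2)⁻¹ := by
  have h := metallicMean_sq y
  have := (metallicMean_pos y).ne'
  rw [qform_arctan]
  field_simp
  linear_combination (metallicMean y ^ 2 - y * metallicMean y + 1) * h

theorem eta_le_qform {W x θ : ℝ} (hx : x ∈ Set.Icc (-(W + 1)) (W + 1)) (hθ : θ ∈ Set.Icc 0 π) :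
    eta W ≤ qform x θ :=
  csInf_le ⟨0, by rintro _ ⟨p, -, rfl⟩; exact (qform_pos _ _).le⟩ ⟨(x, θ), ⟨hx, hθ⟩, rfl⟩

theorem eta_pos {W : ℝ} (hW : -1 ≤ W) : 0 < eta W := by
  have hK : IsCompact (Set.Icc (-(W + 1)) (W + 1) ×ˢ Set.Icc 0 π) :=
    isCompact_Icc.prod isCompact_Icc
  have hne : (Set.Icc (-(W + 1)) (W + 1) ×ˢ Set.Icc 0 π).Nonempty :=
    ⟨(0, 0), ⟨by linarith, by linarith⟩, le_rfl, pi_pos.le⟩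
  obtain ⟨_, _, hmin⟩ := (hK.image (f := fun p : ℝ × ℝ => qform p.1 p.2)
    (by unfold qform; fun_prop)).sInf_mem (hne.image _)
  rw [eta, ← hmin]
  exact qform_pos _ _

theorem metallicMean_sq_le_inv_eta {W : ℝ} (hW : -1 ≤ W) :
    metallicMean (W + 1) ^ 2 ≤ (eta W)⁻¹ := by
  have hθ : arctan (metallicMean (W + 1))⁻¹ ∈ Set.Icc 0 π := by
    refine ⟨?_, (arctan_lt_pi_div_two _).le.trans (by linarith [pi_pos])⟩
    rw [← arctan_zero]
    exact arctan_mono (inv_nonneg.2 (metallicMean_pos _).le)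
  have h := eta_le_qform ⟨by linarith, le_rfl⟩ hθ
  rw [qform_arctan_inv_metallicMean] at h
  exact (le_inv_comm₀ (eta_pos hW) (pow_pos (metallicMean_pos _) 2)).1 h

end Eta

section DirichletHamiltonian

open Matrix Polynomial

variable {N : ℕ}

/-- The paper's `u_n` with Dirichlet values `u_0 = u_{N+1} = 0`; note the index shift
`dirichletPad v (n + 1) = v n`. -/
def dirichletPad {R : Type*} [Zero R] (v : Fin N → R) : ℕ → R
  | 0 => 0
  | i + 1 => if h : i < N then v ⟨i, h⟩ else 0

theorem sum_ite_val_add_one_eq (v : Fin N → ℝ) (i : ℕ) :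
    ∑ k : Fin N, (if (k : ℕ) + 1 = i then v k else 0) = dirichletPad v i := by
  cases i with
  | zero => simp [dirichletPad]
  | succ i =>
    simp only [Nat.add_right_cancel_iff, dirichletPad]
    split_ifs with h
    · convert sum_ite_eq' univ (⟨i, h⟩ : Fin N) v using 2 with k
      · simp [Fin.ext_iff]
      · simp
    · exact sum_eq_zero fun k _ => if_neg (by omega)

theorem mulVec_dirichletH_apply (ε v : Fin N → ℝ) (j : Fin N) :
    (dirichletH N ε *ᵥ v) j = dirichletPad v j + ε j * v j + dirichletPad v (j + 2) := by
  have hentry (k : Fin N) : dirichletH N ε j k * v k = (if k = j then ε j * v k else 0)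
      + (if (k : ℕ) + 1 = j then v k else 0) + (if (k : ℕ) + 1 = j + 2 then v k else 0) := by
    unfold dirichletH
    split_ifs <;> simp_all [Fin.ext_iff]
  simp only [mulVec, dotProduct, hentry, sum_add_distrib, sum_ite_eq', mem_univ, if_true,
    sum_ite_val_add_one_eq]
  ring

theorem eq_mul_eval_tridiagCharpoly {f : ℕ → ℝ} {E : ℝ} {u : ℕ → ℝ} (h0 : u 0 = 0)
    (hu : ∀ j < N, u j + f j * u (j + 1) + u (j + 2) = E * u (j + 1)) :
    ∀ j ≤ N, u (j + 1) = u 1 * eval E (tridiagCharpoly f j) := by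
  intro j
  induction j using Nat.strong_induction_on with
  | _ j ih =>
    match j with
    | 0 => simp [tridiagCharpoly]
    | 1 =>
      intro hj
      have := hu 0 (by omega)
      simp only [tridiagCharpoly, eval_sub, eval_X, eval_C, h0] at this ⊢
      linarith
    | j + 2 =>
      intro hj
      have := hu (j + 1) (by omega)
      rw [ih (j + 1) (by omega) (by omega), ih j (by omega) (by omega)] at this
      rw [tridiagCharpoly.add_two, eval_sub, eval_mul, eval_sub, eval_X, eval_C]
      linear_combination this

theorem isRoot_tridiagCharpoly_of_mulVec_eq {ε v : Fin N → ℝ} {E : ℝ} (hv : v ≠ 0)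
    (hHv : dirichletH N ε *ᵥ v = E • v) :
    (tridiagCharpoly (fun i => dirichletPad ε (i + 1)) N).IsRoot E := by
  have hu : ∀ j < N, dirichletPad v j + dirichletPad ε (j + 1) * dirichletPad v (j + 1)
      + dirichletPad v (j + 2) = E * dirichletPad v (j + 1) := fun j hj => by
    have := congrFun hHv ⟨j, hj⟩
    rw [mulVec_dirichletH_apply] at this
    simpa [dirichletPad, hj] using this
  have hsol := eq_mul_eval_tridiagCharpoly rfl hu
  by_contra hE
  have h1 : dirichletPad v 1 = 0 := by
    have := hsol N le_rfl
    simp only [dirichletPad, lt_irrefl, dite_false] at this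
    exact (mul_eq_zero.1 this.symm).resolve_right hE
  refine hv (funext fun j => ?_)
  have := hsol j j.2.le
  rw [h1, zero_mul] at this
  simpa [dirichletPad] using this

end DirichletHamiltonian

theorem eigenvalue_repulsion_dirichlet_general
    (N : ℕ) (W : ℝ) (hW : 0 ≤ W)
    (ε : Fin N → ℝ) (hε : ∀ n, ε n ∈ Set.Icc 0 W)
    (E₁ E₂ : ℝ)
    (h₁ : ∃ v : Fin N → ℝ, v ≠ 0 ∧ (dirichletH N ε).mulVec v = E₁ • v)
    (h₂ : ∃ v : Fin N → ℝ, v ≠ 0 ∧ (dirichletH N ε).mulVec v = E₂ • v)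
    (hne : E₁ ≠ E₂) :
    Real.pi * ((eta W)⁻¹ - 1) / ((eta W)⁻¹ ^ N - 1) ≤ |E₁ - E₂| := by
  obtain ⟨v₁, hv₁, hHv₁⟩ := h₁
  obtain ⟨v₂, hv₂, hHv₂⟩ := h₂
  set f : ℕ → ℝ := fun i => dirichletPad ε (i + 1)
  have hf : ∀ i < N, f i ∈ Set.Icc 0 W := fun i hi => by
    simpa [f, dirichletPad, hi] using hε ⟨i, hi⟩
  have hE₁ := isRoot_tridiagCharpoly_of_mulVec_eq hv₁ hHv₁
  have hE₂ := isRoot_tridiagCharpoly_of_mulVec_eq hv₂ hHv₂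
  obtain ⟨k, rfl⟩ : ∃ k, N = k + 2 := Nat.exists_eq_add_of_le' <| tridiagCharpoly.natDegree f N ▸
    Polynomial.two_le_natDegree_of_isRoot (tridiagCharpoly.monic f N).ne_zero hE₁ hE₂ hne
  have hy : 1 ≤ W + 1 := by linarith
  have hπ := pi_le_metallicMean_sq_add_one hy
  have hgap := tridiagCharpoly.one_le_abs_sub_mul_pow hf hE₁ hE₂ hne
    (a := metallicMean (W + 1) ^ 2) (by positivity)
    (by simpa [add_assoc, one_add_one_eq_two] using le_metallicMean_pow_four hy)
  calc _ ≤ ((metallicMean (W + 1) ^ 2) ^ k)⁻¹ :=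
        pi_mul_sub_one_div_pow_sub_one_le (by linarith [pi_gt_three])
          (metallicMean_sq_le_inv_eta (by linarith)) hπ k
    _ ≤ |E₁ - E₂| := by
        rw [inv_le_iff_one_le_mul₀ (pow_pos (pow_pos (metallicMean_pos _) 2) k)]
        linarith

/-- **Eigenvalue repulsion, Dirichlet case**: any two distinct eigenvalues of the
Dirichlet Hamiltonian with potential values in `[0, W]` satisfy
`|E₁ − E₂| ≥ π (η(W)⁻¹ − 1) / (η(W)⁻ᴺ − 1)`. -/
theorem eigenvalue_repulsion_dirichlet
    (N : ℕ) (hN : 1 ≤ N) (W : ℝ) (hW : 0 ≤ W)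
    (ε : Fin N → ℝ) (hε : ∀ n, ε n ∈ Set.Icc 0 W)
    (E₁ E₂ : ℝ)
    (h₁ : ∃ v : Fin N → ℝ, v ≠ 0 ∧ (dirichletH N ε).mulVec v = E₁ • v)
    (h₂ : ∃ v : Fin N → ℝ, v ≠ 0 ∧ (dirichletH N ε).mulVec v = E₂ • v)
    (hne : E₁ ≠ E₂) :
    Real.pi * ((eta W)⁻¹ - 1) / ((eta W)⁻¹ ^ N - 1) ≤ |E₁ - E₂| :=
  eigenvalue_repulsion_dirichlet_general N W hW ε hε E₁ E₂ h₁ h₂ hne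
end

section
/- Lower bound for η(W): for every W ≥ 0, η(W) ≥ min{ sin²((1/2) · arctan(2/(W+1))), cos²((1/2) · arctan(2/(W+1))) }. -/
set_option maxHeartbeats 800000


/-- Key algebraic inequality. -/
lemma key_ineq (a s c σ κ : ℝ) (ha : 0 ≤ a) (hs : 0 ≤ s) (hc : 0 ≤ c)
    (h1 : s ^ 2 + c ^ 2 = 1) (hσ : 0 < σ) (hκ : 0 < κ) (h2 : σ ^ 2 + κ ^ 2 = 1)
    (hrel : a * σ * κ = κ ^ 2 - σ ^ 2) :
    σ ^ 2 ≤ 1 - 2 * a * s * c + a ^ 2 * s ^ 2 := by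
  have hu : 0 ≤ κ ^ 2 - σ ^ 2 := by
    rw [← hrel]; positivity
  have hκ1 : κ ≤ 1 := by nlinarith
  set u : ℝ := κ ^ 2 - σ ^ 2 with hudef
  have hcube : u ≤ κ ^ 3 := by nlinarith [mul_nonneg (sub_nonneg.2 hκ1) (by nlinarith : (0:ℝ) ≤ 1 + κ - κ ^ 2)]
  have hdet : 0 ≤ σ ^ 4 * κ ^ 2 * (κ ^ 6 - u ^ 2) := by
    have : 0 ≤ κ ^ 6 - u ^ 2 := by nlinarith
    positivity
  have hA : 0 < σ ^ 2 * κ ^ 4 + u ^ 2 := by positivity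
  have hE : 0 ≤ σ ^ 2 * κ ^ 2 * (κ ^ 2 - 2 * a * s * c + a ^ 2 * s ^ 2) := by
    have hid : (σ ^ 2 * κ ^ 4 + u ^ 2) * (σ ^ 2 * κ ^ 2 * (κ ^ 2 - 2 * a * s * c + a ^ 2 * s ^ 2))
        = ((σ ^ 2 * κ ^ 4 + u ^ 2) * s - σ * κ * u * c) ^ 2
          + σ ^ 4 * κ ^ 2 * (κ ^ 6 - u ^ 2) * c ^ 2 := by
      linear_combination ((σ ^ 2 * κ ^ 4 + u ^ 2) * s ^ 2 * (a * σ * κ + u)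
          - 2 * (σ ^ 2 * κ ^ 4 + u ^ 2) * σ * κ * s * c) * hrel
        + (-(σ ^ 2 * κ ^ 4 + u ^ 2) * σ ^ 2 * κ ^ 4) * h1
        + (σ ^ 2 * κ ^ 2 * u ^ 2 * c ^ 2) * h2
    nlinarith [sq_nonneg ((σ ^ 2 * κ ^ 4 + u ^ 2) * s - σ * κ * u * c),
      mul_nonneg hdet (sq_nonneg c)]
  nlinarith [mul_pos (mul_pos hσ hσ) (mul_pos hκ hκ)]

/-- **Lower bound for `η(W)`**: for every `W ≥ 0`,
`η(W) ≥ min { sin²((1/2)·arctan(2/(W+1))), cos²((1/2)·arctan(2/(W+1))) }`. -/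
theorem eta_lower_bound (W : ℝ) (hW : 0 ≤ W) :
    min (Real.sin (Real.arctan (2 / (W + 1)) / 2) ^ 2)
        (Real.cos (Real.arctan (2 / (W + 1)) / 2) ^ 2) ≤ eta W := by
  have hpi := Real.pi_pos
  set a : ℝ := W + 1 with ha
  have ha1 : (1:ℝ) ≤ a := by linarith
  have ha0 : (0:ℝ) < a := by linarith
  set θ : ℝ := Real.arctan (2 / a) with hθdef
  have hθpos : 0 < θ := by rw [hθdef, ← Real.arctan_zero]; exact Real.arctan_strictMono (by positivity)
  have hθlt : θ < Real.pi / 2 := Real.arctan_lt_pi_div_two _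
  set σ : ℝ := Real.sin (θ / 2) with hσdef
  set κ : ℝ := Real.cos (θ / 2) with hκdef
  have hσpos : 0 < σ := Real.sin_pos_of_pos_of_lt_pi (by linarith) (by linarith)
  have hκpos : 0 < κ := Real.cos_pos_of_mem_Ioo ⟨by linarith, by linarith⟩
  have hpyth : σ ^ 2 + κ ^ 2 = 1 := Real.sin_sq_add_cos_sq _
  have hσκ : σ < κ := by
    have h := Real.sin_lt_sin_of_lt_of_le_pi_div_two (x := θ / 2) (y := Real.pi / 2 - θ / 2)
      (by linarith) (by linarith) (by linarith)
    rwa [Real.sin_pi_div_two_sub] at h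
  -- relation a σ κ = κ² − σ²
  have hcosθ : Real.cos θ = κ ^ 2 - σ ^ 2 := by
    have h2 : θ = 2 * (θ / 2) := by ring
    rw [h2, Real.cos_two_mul]
    rw [← hκdef]; nlinarith
  have hsinθ : Real.sin θ = 2 * σ * κ := by
    have h2 : θ = 2 * (θ / 2) := by ring
    rw [h2, Real.sin_two_mul, ← hσdef, ← hκdef]
  have hcosθpos : 0 < Real.cos θ := Real.cos_pos_of_mem_Ioo ⟨by linarith, hθlt⟩
  have htan : Real.tan θ = 2 / a := Real.tan_arctan _
  have hrel : a * σ * κ = κ ^ 2 - σ ^ 2 := by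
    have h3 : Real.sin θ / Real.cos θ = 2 / a := by rw [← Real.tan_eq_sin_div_cos, htan]
    have h4 : a * Real.sin θ = 2 * Real.cos θ := by
      field_simp at h3; linarith
    rw [hsinθ, hcosθ] at h4; linarith
  have hmin : min (σ ^ 2) (κ ^ 2) = σ ^ 2 := min_eq_left (by nlinarith)
  rw [hmin]
  apply le_csInf
  · refine ⟨qform 0 0, ⟨((0:ℝ), (0:ℝ)), Set.mem_prod.mpr ⟨?_, ?_⟩, rfl⟩⟩
    · exact Set.mem_Icc.mpr ⟨by norm_num; linarith, by norm_num; linarith⟩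
    · exact Set.mem_Icc.mpr ⟨by norm_num, by norm_num; linarith⟩
  · rintro b ⟨⟨x, φ⟩, hmem, rfl⟩
    rw [Set.mem_prod] at hmem
    obtain ⟨hxm, hφm⟩ := hmem
    rw [Set.mem_Icc] at hxm hφm
    obtain ⟨hx1, hx2⟩ := hxm
    obtain ⟨hφ1, hφ2⟩ := hφm
    simp only
    have hsφ : 0 ≤ Real.sin φ := Real.sin_nonneg_of_nonneg_of_le_pi hφ1 hφ2
    have hq : qform x φ = Real.sin φ ^ 2 + (Real.cos φ - x * Real.sin φ) ^ 2 := by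
      have := Real.sin_sq_add_cos_sq φ
      unfold qform; nlinarith
    rcases le_or_gt σ (Real.sin φ) with hcase | hcase
    · rw [hq]
      nlinarith [sq_nonneg (Real.cos φ - x * Real.sin φ)]
    · -- small sin case
      set s : ℝ := Real.sin φ with hsdef
      set c : ℝ := |Real.cos φ| with hcdef
      have hc0 : 0 ≤ c := abs_nonneg _
      have h1 : s ^ 2 + c ^ 2 = 1 := by
        rw [hcdef, sq_abs]; exact Real.sin_sq_add_cos_sq φ
      have hcκ : κ ≤ c := by
        have : κ ^ 2 ≤ c ^ 2 := by nlinarith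
        nlinarith
      have haσκ : a * σ ≤ κ := by
        have : a * σ * κ ≤ κ ^ 2 := by nlinarith
        exact le_of_mul_le_mul_right (by linarith) hκpos
      have hxabs : |x| ≤ a := abs_le.mpr ⟨hx1, hx2⟩
      have hAnn : 0 ≤ c - a * s := by nlinarith
      have hB : c - a * s ≤ |Real.cos φ - x * s| := by
        have h5 : |Real.cos φ| - |x * s| ≤ |Real.cos φ - x * s| := abs_sub_abs_le_abs_sub _ _
        have h6 : |x * s| ≤ a * s := by
          rw [abs_mul, abs_of_nonneg hsφ]
          exact mul_le_mul_of_nonneg_right hxabs hsφ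
        linarith
      have hBsq : (c - a * s) ^ 2 ≤ (Real.cos φ - x * s) ^ 2 := by
        calc (c - a * s) ^ 2 ≤ |Real.cos φ - x * s| ^ 2 := by
              exact pow_le_pow_left₀ hAnn hB 2
          _ = (Real.cos φ - x * s) ^ 2 := sq_abs _
      have hkey := key_ineq a s c σ κ ha0.le hsφ hc0 h1 hσpos hκpos hpyth hrel
      rw [hq]
      nlinarith
end
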